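/- Let R be a commutative ring, D_x, D_y : R → R two commuting derivations extended coefficientwise to R[[λ]] and entrywise to matrices, and let (A₀,B₀) be a zero-curvature representation of n×n matrices over R. If there exists an n×n matrix zero-curvature representation (A(λ), B(λ)) over R[[λ]] with constant terms A₀, B₀ that is NOT formally removable (i.e. there is no invertible matrix S(λ) over R[[λ]] with constant term the identity whose gauge transform carries (A(λ),B(λ)) to the constant series (A₀,B₀)), then there exists a cocycle with respect to (A₀,B₀) that is not a coboundary; in other words, a zero-curvature representation whose first horizontal gauge cohomology H¹ is zero cannot be a member of a formal one-parameter family depending on a formally nonremovable parameter. -/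

import Mathlib

/-- A derivation of a commutative ring: an additive map satisfying the Leibniz rule. -/
def IsDeriv {R : Type*} [CommRing R] (D : R → R) : Prop :=
  (∀ a b, D (a + b) = D a + D b) ∧ (∀ a b, D (a * b) = D a * b + a * D b)

/-- The coefficientwise extension of a map `D : R → R` to formal power series `R[[λ]]`. -/
noncomputable def seriesD {R : Type*} [CommRing R] (D : R → R) :
    PowerSeries R → PowerSeries R :=
  fun φ => PowerSeries.mk fun k => D (PowerSeries.coeff (R := R) k φ)

/-- The `k`-th coefficient matrix of a matrix of formal power series. -/
noncomputable def mcoeff {R : Type*} [CommRing R] {n : ℕ} (k : ℕ)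
    (M : Matrix (Fin n) (Fin n) (PowerSeries R)) : Matrix (Fin n) (Fin n) R :=
  M.map (PowerSeries.coeff (R := R) k)


/-
If `H¹ = 0`, every family `(A(λ), B(λ))` through `(A₀, B₀)` is removable, which gives the
contrapositive. A matrix `S(λ)` gauges `(A, B)` to `(A₀, B₀)` exactly when its gauge defects
`D_x S - (A₀ S - S A)` and `D_y S - (B₀ S - S B)` vanish. Because both pairs have zero curvature
and `D_x`, `D_y` commute, the defects satisfy a cocycle identity. So if they vanish below order
`k`, their order-`k` coefficients form a cocycle for `(A₀, B₀)`. That cocycle is the coboundary of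
some `T`, and replacing `S` by `S - λᵏ T` removes the defects at order `k` without changing the
lower ones. Starting from `S = 1` and taking the coefficientwise limit gives the gauge
transformation.
-/

open PowerSeries

namespace IsDeriv

variable {S : Type*} [CommRing S] {D : S → S}

def toAddMonoidHom (hD : IsDeriv D) : S →+ S :=
  AddMonoidHom.mk' D hD.1

@[simp]
theorem coe_toAddMonoidHom (hD : IsDeriv D) : ⇑hD.toAddMonoidHom = D :=
  rfl

theorem map_zero (hD : IsDeriv D) : D 0 = 0 :=
  _root_.map_zero hD.toAddMonoidHom

theorem map_one (hD : IsDeriv D) : D 1 = 0 := by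
  simpa using hD.2 1 1

theorem map_sub (hD : IsDeriv D) (a b : S) : D (a - b) = D a - D b :=
  _root_.map_sub hD.toAddMonoidHom a b

theorem map_sum (hD : IsDeriv D) {ι : Type*} (s : Finset ι) (f : ι → S) :
    D (∑ i ∈ s, f i) = ∑ i ∈ s, D (f i) :=
  _root_.map_sum hD.toAddMonoidHom f s

theorem matrix_map_mul (hD : IsDeriv D) {ι : Type*} [Fintype ι] (P Q : Matrix ι ι S) :
    (P * Q).map D = P.map D * Q + P * Q.map D := by
  ext i j
  simp [Matrix.mul_apply, hD.map_sum, hD.2, Finset.sum_add_distrib]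

theorem matrix_map_one (hD : IsDeriv D) {ι : Type*} [DecidableEq ι] :
    (1 : Matrix ι ι S).map D = 0 := by
  ext i j
  by_cases h : i = j <;> simp [h, hD.map_zero, hD.map_one]

theorem seriesD (hD : IsDeriv D) : IsDeriv (seriesD D) := by
  refine ⟨fun φ ψ => ?_, fun φ ψ => ?_⟩ <;> ext k
  · simp [_root_.seriesD, hD.1]
  · simp [_root_.seriesD, coeff_mul, hD.map_sum, hD.2, Finset.sum_add_distrib]

end IsDeriv

section Coefficients

variable {R : Type*} [CommRing R] {n : ℕ}

noncomputable def mmon (m : ℕ) (M : Matrix (Fin n) (Fin n) R) : Matrix (Fin n) (Fin n) R⟦X⟧ :=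
  M.map (monomial m)

noncomputable def mseries (c : ℕ → Matrix (Fin n) (Fin n) R) : Matrix (Fin n) (Fin n) R⟦X⟧ :=
  Matrix.of fun a b => PowerSeries.mk fun m => c m a b

theorem mcoeff_mmon (k m : ℕ) (M : Matrix (Fin n) (Fin n) R) :
    mcoeff k (mmon m M) = if k = m then M else 0 := by
  ext a b
  by_cases h : k = m <;> simp [mcoeff, mmon, coeff_monomial, h]

theorem mcoeff_mseries (k : ℕ) (c : ℕ → Matrix (Fin n) (Fin n) R) : mcoeff k (mseries c) = c k := by
  ext a b
  simp [mcoeff, mseries]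

theorem mcoeff_zero_one : mcoeff 0 (1 : Matrix (Fin n) (Fin n) R⟦X⟧) = 1 :=
  Matrix.map_one _ (_root_.map_zero _) coeff_zero_one

theorem mcoeff_sub (k : ℕ) (P Q : Matrix (Fin n) (Fin n) R⟦X⟧) :
    mcoeff k (P - Q) = mcoeff k P - mcoeff k Q :=
  Matrix.map_sub _ (_root_.map_sub _) P Q

theorem mcoeff_mul (k : ℕ) (P Q : Matrix (Fin n) (Fin n) R⟦X⟧) :
    mcoeff k (P * Q) = ∑ i ∈ Finset.range (k + 1), mcoeff i P * mcoeff (k - i) Q := by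
  ext a b
  simp only [mcoeff, Matrix.map_apply, Matrix.mul_apply, Matrix.sum_apply, coeff_mul,
    Finset.Nat.sum_antidiagonal_eq_sum_range_succ_mk, _root_.map_sum]
  exact Finset.sum_comm

theorem mcoeff_mul_of_forall_lt_eq_zero {k : ℕ} {P : Matrix (Fin n) (Fin n) R⟦X⟧}
    (hP : ∀ i < k, mcoeff i P = 0) (Q : Matrix (Fin n) (Fin n) R⟦X⟧) :
    mcoeff k (P * Q) = mcoeff k P * mcoeff 0 Q := by
  rw [mcoeff_mul, Finset.sum_range_succ, Nat.sub_self, add_eq_right]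
  exact Finset.sum_eq_zero fun i hi => by rw [hP i (Finset.mem_range.mp hi), zero_mul]

theorem mcoeff_map_seriesD (k : ℕ) (D : R → R) (P : Matrix (Fin n) (Fin n) R⟦X⟧) :
    mcoeff k (P.map (seriesD D)) = (mcoeff k P).map D := by
  ext a b
  simp [mcoeff, seriesD]

theorem mcoeff_map_C_mul (k : ℕ) (M : Matrix (Fin n) (Fin n) R) (P : Matrix (Fin n) (Fin n) R⟦X⟧) :
    mcoeff k (M.map (C (R := R)) * P) = M * mcoeff k P := by
  ext a b
  simp [mcoeff, Matrix.mul_apply, coeff_C_mul]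

theorem eq_zero_of_forall_mcoeff_eq_zero {P : Matrix (Fin n) (Fin n) R⟦X⟧}
    (h : ∀ k, mcoeff k P = 0) : P = 0 := by
  ext a b k
  simpa [mcoeff] using congrFun (congrFun (h k) a) b

theorem isUnit_of_isUnit_mcoeff_zero {S : Matrix (Fin n) (Fin n) R⟦X⟧}
    (h : IsUnit (mcoeff 0 S)) : IsUnit S := by
  rw [Matrix.isUnit_iff_isUnit_det] at h ⊢
  rw [isUnit_iff_constantCoeff, RingHom.map_det, RingHom.mapMatrix_apply,
    ← coeff_zero_eq_constantCoeff]
  exact h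

theorem map_C_map_seriesD {D : R → R} (hD : IsDeriv D) (M : Matrix (Fin n) (Fin n) R) :
    (M.map (C (R := R))).map (seriesD D) = (M.map D).map (C (R := R)) := by
  ext a b k
  by_cases h : k = 0 <;> simp [seriesD, coeff_C, h, hD.map_zero]

end Coefficients

/-- The gauge defects `Φ`, `Ψ` of `S` between two flat pairs satisfy the cocycle identity. -/
theorem gaugeDefect_cocycle_identity {M : Type*} [Ring M] (dx dy : M →+ M)
    (hdx : ∀ a b, dx (a * b) = dx a * b + a * dx b) (hdy : ∀ a b, dy (a * b) = dy a * b + a * dy b)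
    {S A B A' B' Φ Ψ : M} (hS : dx (dy S) = dy (dx S))
    (hAB : dy A - dx B + (A * B - B * A) = 0) (hAB' : dy A' - dx B' + (A' * B' - B' * A') = 0)
    (hΦ : Φ = dx S - (A' * S - S * A)) (hΨ : Ψ = dy S - (B' * S - S * B)) :
    dy Φ - (B' * Φ - Φ * B) = dx Ψ - (A' * Ψ - Ψ * A) := by
  have hA : dy A = dx B - (A * B - B * A) := by rw [← sub_eq_zero, ← hAB]; abel
  have hA' : dy A' = dx B' - (A' * B' - B' * A') := by rw [← sub_eq_zero, ← hAB']; abel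
  subst hΦ hΨ
  simp only [map_sub, hdx, hdy, hS, hA, hA']
  noncomm_ring

section Gauge

variable {R : Type*} [CommRing R] {n : ℕ}

/-- The paper's `ĎD_x` (with `D = D_x`, `A₀`) and `ĎD_y` (with `D = D_y`, `B₀`). -/
def covDeriv (D : R → R) (A₀ S : Matrix (Fin n) (Fin n) R) : Matrix (Fin n) (Fin n) R :=
  S.map D - (A₀ * S - S * A₀)

def IsCocycle (Dx Dy : R → R) (A₀ B₀ U V : Matrix (Fin n) (Fin n) R) : Prop :=
  covDeriv Dy B₀ U = covDeriv Dx A₀ V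

def IsCoboundary (Dx Dy : R → R) (A₀ B₀ U V : Matrix (Fin n) (Fin n) R) : Prop :=
  ∃ S, U = covDeriv Dx A₀ S ∧ V = covDeriv Dy B₀ S

/-- `S` gauges `A` to the constant `A₀`, i.e. `(D S) S⁻¹ + S A S⁻¹ = A₀`, iff this vanishes. -/
noncomputable def gaugeDefect (D : R → R) (A₀ : Matrix (Fin n) (Fin n) R)
    (A S : Matrix (Fin n) (Fin n) R⟦X⟧) : Matrix (Fin n) (Fin n) R⟦X⟧ :=
  S.map (seriesD D) - (A₀.map (C (R := R)) * S - S * A)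

variable {D Dx Dy : R → R} {A₀ B₀ : Matrix (Fin n) (Fin n) R} {A B : Matrix (Fin n) (Fin n) R⟦X⟧}

theorem covDeriv_one (hD : IsDeriv D) : covDeriv D A₀ 1 = 0 := by
  simp [covDeriv, hD.matrix_map_one]

theorem mcoeff_zero_gaugeDefect (hA : mcoeff 0 A = A₀) (S : Matrix (Fin n) (Fin n) R⟦X⟧) :
    mcoeff 0 (gaugeDefect D A₀ A S) = covDeriv D A₀ (mcoeff 0 S) := by
  rw [gaugeDefect, mcoeff_sub, mcoeff_sub, mcoeff_map_seriesD, mcoeff_map_C_mul,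
    mcoeff_mul_of_forall_lt_eq_zero (fun i hi => absurd hi i.not_lt_zero), hA, covDeriv]

theorem mcoeff_gaugeDefect_congr {m : ℕ} {S S' : Matrix (Fin n) (Fin n) R⟦X⟧}
    (h : ∀ i ≤ m, mcoeff i S = mcoeff i S') :
    mcoeff m (gaugeDefect D A₀ A S) = mcoeff m (gaugeDefect D A₀ A S') := by
  simp only [gaugeDefect, mcoeff_sub, mcoeff_map_seriesD, mcoeff_map_C_mul]
  rw [mcoeff_mul, mcoeff_mul, h m le_rfl]
  congr 2
  exact Finset.sum_congr rfl fun i hi => by rw [h i (Finset.mem_range_succ_iff.mp hi)]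

theorem mcoeff_gaugeDefect_sub_mmon (hD : IsDeriv D) (hA : mcoeff 0 A = A₀) (k : ℕ)
    (S : Matrix (Fin n) (Fin n) R⟦X⟧) (T : Matrix (Fin n) (Fin n) R) :
    mcoeff k (gaugeDefect D A₀ A (S - mmon k T)) =
      mcoeff k (gaugeDefect D A₀ A S) - covDeriv D A₀ T := by
  have hlow : ∀ i < k, mcoeff i (mmon k T) = 0 := fun i hi => by rw [mcoeff_mmon, if_neg hi.ne]
  have hsplit : gaugeDefect D A₀ A (S - mmon k T) = gaugeDefect D A₀ A S -
      ((mmon k T).map (seriesD D) - (A₀.map (C (R := R)) * mmon k T - mmon k T * A)) := by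
    simp only [gaugeDefect, Matrix.map_sub _ hD.seriesD.map_sub]
    noncomm_ring
  rw [hsplit, mcoeff_sub, mcoeff_sub, mcoeff_sub, mcoeff_map_seriesD, mcoeff_map_C_mul,
    mcoeff_mul_of_forall_lt_eq_zero hlow, mcoeff_mmon, if_pos rfl, hA, covDeriv]

theorem isCocycle_mcoeff_gaugeDefect (hDx : IsDeriv Dx) (hDy : IsDeriv Dy)
    (hcomm : ∀ a, Dx (Dy a) = Dy (Dx a))
    (hzcr : A₀.map Dy - B₀.map Dx + (A₀ * B₀ - B₀ * A₀) = 0)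
    (hAB : A.map (seriesD Dy) - B.map (seriesD Dx) + (A * B - B * A) = 0)
    (hA : mcoeff 0 A = A₀) (hB : mcoeff 0 B = B₀) {k : ℕ} {S : Matrix (Fin n) (Fin n) R⟦X⟧}
    (hΦ : ∀ i < k, mcoeff i (gaugeDefect Dx A₀ A S) = 0)
    (hΨ : ∀ i < k, mcoeff i (gaugeDefect Dy B₀ B S) = 0) :
    IsCocycle Dx Dy A₀ B₀ (mcoeff k (gaugeDefect Dx A₀ A S)) (mcoeff k (gaugeDefect Dy B₀ B S)) := by
  have hS : (S.map (seriesD Dy)).map (seriesD Dx) = (S.map (seriesD Dx)).map (seriesD Dy) := by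
    ext a b j
    simp [seriesD, hcomm]
  have hzcrC : (A₀.map (C (R := R))).map (seriesD Dy) - (B₀.map (C (R := R))).map (seriesD Dx) +
      (A₀.map (C (R := R)) * B₀.map (C (R := R)) - B₀.map (C (R := R)) * A₀.map (C (R := R))) = 0 := by
    have h := congrArg (C (R := R)).mapMatrix hzcr
    simp only [map_add, map_sub, map_mul, map_zero, RingHom.mapMatrix_apply] at h
    rwa [map_C_map_seriesD hDy, map_C_map_seriesD hDx]
  have key := gaugeDefect_cocycle_identity
    hDx.seriesD.toAddMonoidHom.mapMatrix hDy.seriesD.toAddMonoidHom.mapMatrix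
    hDx.seriesD.matrix_map_mul hDy.seriesD.matrix_map_mul (A' := A₀.map (C (R := R)))
    (B' := B₀.map (C (R := R))) hS hAB hzcrC (Φ := gaugeDefect Dx A₀ A S)
    (Ψ := gaugeDefect Dy B₀ B S) rfl rfl
  replace key := congrArg (mcoeff k) key
  simp only [AddMonoidHom.mapMatrix_apply, IsDeriv.coe_toAddMonoidHom, mcoeff_sub,
    mcoeff_map_seriesD, mcoeff_map_C_mul, mcoeff_mul_of_forall_lt_eq_zero hΦ,
    mcoeff_mul_of_forall_lt_eq_zero hΨ, hA, hB] at key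
  exact key

theorem gauge_eq_of_gaugeDefect_eq_zero {S T : Matrix (Fin n) (Fin n) R⟦X⟧}
    (h : gaugeDefect D A₀ A S = 0) (hST : S * T = 1) :
    S.map (seriesD D) * T + S * A * T = A₀.map (C (R := R)) := by
  have h' : S.map (seriesD D) + S * A = A₀.map (C (R := R)) * S := by
    rw [← sub_eq_zero, ← h, gaugeDefect]
    abel
  calc S.map (seriesD D) * T + S * A * T = (S.map (seriesD D) + S * A) * T := (add_mul ..).symm
    _ = A₀.map (C (R := R)) := by rw [h', mul_assoc, hST, mul_one]

end Gauge

section Approximation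

variable {R : Type*} [CommRing R] {n : ℕ}

/-- Successive approximation of a removing gauge: step `k + 1` subtracts `λᵏ⁺¹ T`, where
`T = prim U V` is meant to be a primitive of the order-`(k + 1)` gauge defects `(U, V)`. -/
noncomputable def gaugeApprox (Dx Dy : R → R) (A₀ B₀ : Matrix (Fin n) (Fin n) R)
    (A B : Matrix (Fin n) (Fin n) R⟦X⟧)
    (prim : Matrix (Fin n) (Fin n) R → Matrix (Fin n) (Fin n) R → Matrix (Fin n) (Fin n) R) :
    ℕ → Matrix (Fin n) (Fin n) R⟦X⟧
  | 0 => 1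
  | k + 1 =>
    let S := gaugeApprox Dx Dy A₀ B₀ A B prim k
    S - mmon (k + 1)
      (prim (mcoeff (k + 1) (gaugeDefect Dx A₀ A S)) (mcoeff (k + 1) (gaugeDefect Dy B₀ B S)))

variable {Dx Dy : R → R} {A₀ B₀ : Matrix (Fin n) (Fin n) R} {A B : Matrix (Fin n) (Fin n) R⟦X⟧}
  {prim : Matrix (Fin n) (Fin n) R → Matrix (Fin n) (Fin n) R → Matrix (Fin n) (Fin n) R}

theorem mcoeff_gaugeApprox_of_le {m k : ℕ} (h : m ≤ k) :
    mcoeff m (gaugeApprox Dx Dy A₀ B₀ A B prim k) = mcoeff m (gaugeApprox Dx Dy A₀ B₀ A B prim m) := by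
  induction k, h using Nat.le_induction with
  | base => rfl
  | succ k hmk ih => rw [gaugeApprox, mcoeff_sub, mcoeff_mmon, if_neg (by omega), sub_zero, ih]

theorem mcoeff_gaugeDefect_gaugeApprox (hDx : IsDeriv Dx) (hDy : IsDeriv Dy)
    (hcomm : ∀ a, Dx (Dy a) = Dy (Dx a))
    (hzcr : A₀.map Dy - B₀.map Dx + (A₀ * B₀ - B₀ * A₀) = 0)
    (hAB : A.map (seriesD Dy) - B.map (seriesD Dx) + (A * B - B * A) = 0)
    (hA : mcoeff 0 A = A₀) (hB : mcoeff 0 B = B₀)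
    (hprim : ∀ U V, IsCocycle Dx Dy A₀ B₀ U V →
      U = covDeriv Dx A₀ (prim U V) ∧ V = covDeriv Dy B₀ (prim U V)) (k : ℕ) :
    ∀ m ≤ k, mcoeff m (gaugeDefect Dx A₀ A (gaugeApprox Dx Dy A₀ B₀ A B prim k)) = 0 ∧
      mcoeff m (gaugeDefect Dy B₀ B (gaugeApprox Dx Dy A₀ B₀ A B prim k)) = 0 := by
  induction k with
  | zero =>
    intro m hm
    obtain rfl := Nat.le_zero.mp hm
    rw [mcoeff_zero_gaugeDefect hA, mcoeff_zero_gaugeDefect hB, gaugeApprox, mcoeff_zero_one,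
      covDeriv_one hDx, covDeriv_one hDy]
    exact ⟨rfl, rfl⟩
  | succ k ih =>
    intro m hm
    rcases hm.lt_or_eq with hm | rfl
    · have hlow : ∀ i ≤ m, mcoeff i (gaugeApprox Dx Dy A₀ B₀ A B prim (k + 1)) =
          mcoeff i (gaugeApprox Dx Dy A₀ B₀ A B prim k) := fun i hi =>
        (mcoeff_gaugeApprox_of_le (by omega)).trans (mcoeff_gaugeApprox_of_le (by omega)).symm
      rw [mcoeff_gaugeDefect_congr hlow, mcoeff_gaugeDefect_congr hlow]
      exact ih m (by omega)
    · obtain ⟨hU, hV⟩ := hprim _ _ <| isCocycle_mcoeff_gaugeDefect hDx hDy hcomm hzcr hAB hA hB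
        (k := k + 1) (fun i hi => (ih i (by omega)).1) (fun i hi => (ih i (by omega)).2)
      rw [gaugeApprox, mcoeff_gaugeDefect_sub_mmon hDx hA, mcoeff_gaugeDefect_sub_mmon hDy hB,
        ← hU, ← hV, sub_self, sub_self]
      exact ⟨rfl, rfl⟩

theorem exists_gauge_of_forall_isCoboundary (hDx : IsDeriv Dx) (hDy : IsDeriv Dy)
    (hcomm : ∀ a, Dx (Dy a) = Dy (Dx a))
    (hzcr : A₀.map Dy - B₀.map Dx + (A₀ * B₀ - B₀ * A₀) = 0)
    (hH1 : ∀ U V, IsCocycle Dx Dy A₀ B₀ U V → IsCoboundary Dx Dy A₀ B₀ U V)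
    (hAB : A.map (seriesD Dy) - B.map (seriesD Dx) + (A * B - B * A) = 0)
    (hA : mcoeff 0 A = A₀) (hB : mcoeff 0 B = B₀) :
    ∃ S, mcoeff 0 S = 1 ∧ gaugeDefect Dx A₀ A S = 0 ∧ gaugeDefect Dy B₀ B S = 0 := by
  choose! prim hprim using hH1
  set G := gaugeApprox Dx Dy A₀ B₀ A B prim
  have hvanish := mcoeff_gaugeDefect_gaugeApprox hDx hDy hcomm hzcr hAB hA hB hprim
  have hlimit : ∀ m, ∀ i ≤ m, mcoeff i (mseries fun j => mcoeff j (G j)) = mcoeff i (G m) :=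
    fun m i hi => by rw [mcoeff_mseries, mcoeff_gaugeApprox_of_le hi]
  refine ⟨mseries fun j => mcoeff j (G j), by rw [mcoeff_mseries]; exact mcoeff_zero_one, ?_, ?_⟩
  · exact eq_zero_of_forall_mcoeff_eq_zero fun m => by
      rw [mcoeff_gaugeDefect_congr (hlimit m), (hvanish m m le_rfl).1]
  · exact eq_zero_of_forall_mcoeff_eq_zero fun m => by
      rw [mcoeff_gaugeDefect_congr (hlimit m), (hvanish m m le_rfl).2]

end Approximation

/-- If a zero-curvature representation `(A₀, B₀)` is a member of a formal one-parameter
family over `R[[λ]]` whose parameter is not formally removable, then there exists a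
cocycle with respect to `(A₀, B₀)` that is not a coboundary; equivalently, a
zero-curvature representation with vanishing first horizontal gauge cohomology `H¹`
cannot be a member of a family depending on a formally nonremovable parameter. -/
theorem nonremovable_parameter_gives_nonzero_H1 {R : Type*} [CommRing R] {n : ℕ}
    (Dx Dy : R → R) (hDx : IsDeriv Dx) (hDy : IsDeriv Dy)
    (hcomm : ∀ a, Dx (Dy a) = Dy (Dx a))
    (A₀ B₀ : Matrix (Fin n) (Fin n) R)
    (hzcr : A₀.map Dy - B₀.map Dx + (A₀ * B₀ - B₀ * A₀) = 0)
    (hex : ∃ A B : Matrix (Fin n) (Fin n) (PowerSeries R),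
      A.map (seriesD Dy) - B.map (seriesD Dx) + (A * B - B * A) = 0 ∧
      mcoeff 0 A = A₀ ∧ mcoeff 0 B = B₀ ∧
      ¬ ∃ S T : Matrix (Fin n) (Fin n) (PowerSeries R),
        mcoeff 0 S = 1 ∧ S * T = 1 ∧ T * S = 1 ∧
        S.map (seriesD Dx) * T + S * A * T = A₀.map (PowerSeries.C (R := R)) ∧
        S.map (seriesD Dy) * T + S * B * T = B₀.map (PowerSeries.C (R := R))) :
    ∃ U V : Matrix (Fin n) (Fin n) R,
      U.map Dy - (B₀ * U - U * B₀) = V.map Dx - (A₀ * V - V * A₀) ∧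
      ¬ ∃ S : Matrix (Fin n) (Fin n) R,
        U = S.map Dx - (A₀ * S - S * A₀) ∧ V = S.map Dy - (B₀ * S - S * B₀) := by
  obtain ⟨A, B, hAB, hA, hB, hnonremovable⟩ := hex
  by_contra hH1
  push Not at hH1
  obtain ⟨S, hS0, hSx, hSy⟩ := exists_gauge_of_forall_isCoboundary hDx hDy hcomm hzcr hH1 hAB hA hB
  obtain ⟨u, rfl⟩ := isUnit_of_isUnit_mcoeff_zero (hS0 ▸ isUnit_one)
  exact hnonremovable ⟨u, ↑u⁻¹, hS0, u.mul_inv, u.inv_mul,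
    gauge_eq_of_gaugeDefect_eq_zero hSx u.mul_inv, gauge_eq_of_gaugeDefect_eq_zero hSy u.mul_inv⟩
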